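/- On the singular set {|α|² = |β|²} of the flat front f = AA*, and with the cross product at base point f, the following hold: f' × f'' = (i/2)(αβ' - α'β)g, f' × f_z̄z̄ = (i/2)λ_z̄ g, f_z̄ × f'' = -(i/2)λ' g, and f_z̄ × f_z̄z̄ = (i/2) conj(α'β - αβ') g, where g = Ae₃A*, λ = αᾱ - ββ̄, λ' = α'ᾱ - β'β̄, λ_z̄ = α conj(α') - β conj(β'). -/
import Mathlib


open Matrix Complex ComplexConjugate

def e3 : Matrix (Fin 2) (Fin 2) ℂ := !![1, 0; 0, -1]

/-- `X × Y = (i/2)(X p⁻¹ Y - Y p⁻¹ X)` at base point `p`. -/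
noncomputable def cross (p X Y : Matrix (Fin 2) (Fin 2) ℂ) :
    Matrix (Fin 2) (Fin 2) ℂ :=
  (Complex.I / 2) • (X * p⁻¹ * Y - Y * p⁻¹ * X)

lemma cross_conj (A : Matrix (Fin 2) (Fin 2) ℂ) (hA : A.det = 1)
    (X Y : Matrix (Fin 2) (Fin 2) ℂ) :
    cross (A * Aᴴ) (A * X * Aᴴ) (A * Y * Aᴴ)
      = A * ((Complex.I / 2) • (X * Y - Y * X)) * Aᴴ := by
  have hinv : IsUnit A.det := by simp [hA]
  have hinvH : IsUnit Aᴴ.det := by simp [hA]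
  have h : (A * Aᴴ)⁻¹ = Aᴴ⁻¹ * A⁻¹ := Matrix.mul_inv_rev A Aᴴ
  have hAH : Aᴴ * Aᴴ⁻¹ = 1 := Matrix.mul_nonsing_inv _ hinvH
  have hAA : A⁻¹ * A = 1 := Matrix.nonsing_inv_mul _ hinv
  simp only [cross, h]
  rw [show ∀ (X Y : Matrix (Fin 2) (Fin 2) ℂ),
    (A * X * Aᴴ) * (Aᴴ⁻¹ * A⁻¹) * (A * Y * Aᴴ) = A * (X * Y) * Aᴴ by
      intro X Y
      calc (A * X * Aᴴ) * (Aᴴ⁻¹ * A⁻¹) * (A * Y * Aᴴ)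
          = A * X * (Aᴴ * Aᴴ⁻¹) * (A⁻¹ * A) * Y * Aᴴ := by
            simp only [Matrix.mul_assoc]
        _ = A * (X * Y) * Aᴴ := by simp [hAH, hAA, Matrix.mul_assoc]]
  rw [show ∀ (X Y : Matrix (Fin 2) (Fin 2) ℂ),
    (A * Y * Aᴴ) * (Aᴴ⁻¹ * A⁻¹) * (A * X * Aᴴ) = A * (Y * X) * Aᴴ by
      intro X Y
      calc (A * Y * Aᴴ) * (Aᴴ⁻¹ * A⁻¹) * (A * X * Aᴴ)
          = A * Y * (Aᴴ * Aᴴ⁻¹) * (A⁻¹ * A) * X * Aᴴ := by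
            simp only [Matrix.mul_assoc]
        _ = A * (Y * X) * Aᴴ := by simp [hAH, hAA, Matrix.mul_assoc]]
  rw [← Matrix.sub_mul, ← Matrix.mul_sub, ← Matrix.smul_mul, ← Matrix.mul_smul]

/-- On the singular set `{|α|² = |β|²}` of `f = AAᴴ` (`det A = 1`), with
`f' = ADAᴴ`, `f_z̄ = ADᴴAᴴ`, `f'' = A[[αβ,α'],[β',αβ]]Aᴴ`,
`f_z̄z̄ = A[[ᾱβ̄,β̄'],[ᾱ',ᾱβ̄]]Aᴴ` and the cross product at base point `f`:
`f' × f'' = (i/2)(αβ'-α'β)g`, `f' × f_z̄z̄ = (i/2)λ_z̄ g`,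
`f_z̄ × f'' = -(i/2)λ' g`, `f_z̄ × f_z̄z̄ = (i/2)·conj(α'β-αβ')·g`,
where `g = Ae₃Aᴴ`, `λ' = α'ᾱ - β'β̄`, `λ_z̄ = α·conj α' - β·conj β'`.
Here `α, β, α', β'` denote the values of the data and its derivatives at the
point considered, written `a, b, da, db`. -/
theorem cross_second_derivatives_f (A : Matrix (Fin 2) (Fin 2) ℂ)
    (hA : A.det = 1) (a b da db : ℂ) (hsing : a * conj a = b * conj b) :
    cross (A * Aᴴ) (A * !![0, a; b, 0] * Aᴴ)
        (A * !![a * b, da; db, a * b] * Aᴴ)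
      = ((Complex.I / 2) * (a * db - da * b)) • (A * e3 * Aᴴ) ∧
    cross (A * Aᴴ) (A * !![0, a; b, 0] * Aᴴ)
        (A * !![conj a * conj b, conj db; conj da, conj a * conj b] * Aᴴ)
      = ((Complex.I / 2) * (a * conj da - b * conj db)) • (A * e3 * Aᴴ) ∧
    cross (A * Aᴴ) (A * (!![0, a; b, 0])ᴴ * Aᴴ)
        (A * !![a * b, da; db, a * b] * Aᴴ)
      = (-(Complex.I / 2) * (da * conj a - db * conj b)) • (A * e3 * Aᴴ) ∧
    cross (A * Aᴴ) (A * (!![0, a; b, 0])ᴴ * Aᴴ)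
        (A * !![conj a * conj b, conj db; conj da, conj a * conj b] * Aᴴ)
      = ((Complex.I / 2) * conj (da * b - a * db)) • (A * e3 * Aᴴ) := by
  have key : ∀ (X Y : Matrix (Fin 2) (Fin 2) ℂ) (c : ℂ),
      (Complex.I / 2) • (X * Y - Y * X) = c • e3 →
      cross (A * Aᴴ) (A * X * Aᴴ) (A * Y * Aᴴ) = c • (A * e3 * Aᴴ) := by
    intro X Y c h
    rw [cross_conj A hA, h, Matrix.mul_smul, Matrix.smul_mul]
  have hD : (!![0, a; b, 0] : Matrix (Fin 2) (Fin 2) ℂ)ᴴ = !![0, conj b; conj a, 0] := by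
    ext i j; fin_cases i <;> fin_cases j <;> simp [Matrix.conjTranspose_apply]
  refine ⟨key _ _ _ ?_, key _ _ _ ?_, ?_, ?_⟩
  · ext i j; fin_cases i <;> fin_cases j <;>
      simp [e3, Matrix.mul_apply, Fin.sum_univ_two] <;> ring
  · ext i j; fin_cases i <;> fin_cases j <;>
      simp [e3, Matrix.mul_apply, Fin.sum_univ_two] <;> ring_nf <;>
      linear_combination (Complex.I / 2) * conj db * hsing
  · rw [hD]; apply key; ext i j; fin_cases i <;> fin_cases j <;>
      simp [e3, Matrix.mul_apply, Fin.sum_univ_two] <;> ring_nf <;>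
      linear_combination (Complex.I / 2) * da * hsing
  · rw [hD]; apply key; ext i j; fin_cases i <;> fin_cases j <;>
      simp [e3, Matrix.mul_apply, Fin.sum_univ_two, _root_.map_mul, _root_.map_sub] <;> ring
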